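/- arXiv:2303.00480 — 4 statements merged into one kernel-verified Lean document; each statement's English description precedes it below -/
import Mathlib

section
/- Let p ∈ (2,4), let W = diag(w) with w_i > 0 for all i, and let Q be an m×m matrix with nonnegative entries such that for every i, Σ_j Q_{ij} ≤ w_i. Define G = (2/p)·W + (1−2/p)·Q. Then for any vectors s, y ∈ ℝ^m satisfying G y = W s, we have ‖y‖_∞ ≤ (1/(4/p − 1))·‖s‖_∞. -/
open Matrix

/-- Operator infinity norm bound: if `G = (2/p)·W + (1-2/p)·Q` with `Q` entrywise
nonnegative and row sums at most the diagonal of `W`, and `G y = W s`, then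
`‖y‖_∞ ≤ (1/(4/p - 1))·‖s‖_∞` for `2 < p < 4`. -/
theorem statement_0 {m : ℕ} (p : ℝ) (hp2 : 2 < p) (hp4 : p < 4)
    (w : Fin m → ℝ) (hw : ∀ i, 0 < w i)
    (Q : Matrix (Fin m) (Fin m) ℝ) (hQ : ∀ i j, 0 ≤ Q i j)
    (hrow : ∀ i, ∑ j, Q i j ≤ w i)
    (s y : Fin m → ℝ)
    (hGy : ((2 / p) • Matrix.diagonal w + (1 - 2 / p) • Q).mulVec y
            = (Matrix.diagonal w).mulVec s) :
    ‖y‖ ≤ (1 / (4 / p - 1)) * ‖s‖ := by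
  have hp0 : 0 < p := by linarith
  have hc : 0 < 4 / p - 1 := by
    rw [sub_pos, lt_div_iff₀ hp0]; linarith
  have hc2 : (0:ℝ) ≤ 1 - 2 / p := by
    rw [sub_nonneg, div_le_one hp0]; linarith
  rcases Nat.eq_zero_or_pos m with hm | hm
  · subst hm
    have hy0 : y = 0 := Subsingleton.elim _ _
    rw [hy0, norm_zero]
    positivity
  · have : Nonempty (Fin m) := ⟨⟨0, hm⟩⟩
    obtain ⟨i, hi⟩ := Finite.exists_max (fun i => |y i|)
    have hyi : ‖y‖ = |y i| := by
      apply le_antisymm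
      · exact (pi_norm_le_iff_of_nonneg (abs_nonneg _)).2 fun j => hi j
      · exact norm_le_pi_norm y i
    have key := congrFun hGy i
    simp only [Matrix.add_mulVec, Matrix.smul_mulVec, Pi.add_apply, Pi.smul_apply,
      Matrix.mulVec_diagonal, smul_eq_mul] at key
    have hQmv : Q.mulVec y i = ∑ j, Q i j * y j := rfl
    rw [hQmv] at key
    have hsum : |∑ j, Q i j * y j| ≤ w i * ‖y‖ := by
      calc |∑ j, Q i j * y j| ≤ ∑ j, |Q i j * y j| := Finset.abs_sum_le_sum_abs _ _
        _ ≤ ∑ j, Q i j * ‖y‖ := by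
            apply Finset.sum_le_sum; intro j _
            rw [abs_mul, abs_of_nonneg (hQ i j)]
            exact mul_le_mul_of_nonneg_left (by rw [hyi]; exact hi j) (hQ i j)
        _ = (∑ j, Q i j) * ‖y‖ := by rw [Finset.sum_mul]
        _ ≤ w i * ‖y‖ := mul_le_mul_of_nonneg_right (hrow i) (norm_nonneg y)
    have hs : |s i| ≤ ‖s‖ := norm_le_pi_norm s i
    have hwi := hw i
    have h1 : 2 / p * (w i * |y i|) ≤ w i * ‖s‖ + (1 - 2 / p) * (w i * ‖y‖) := by
      have heq : 2 / p * (w i * y i) = w i * s i - (1 - 2 / p) * ∑ j, Q i j * y j := by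
        linarith
      calc 2 / p * (w i * |y i|) = |2 / p * (w i * y i)| := by
              rw [abs_mul, abs_mul, abs_of_nonneg hwi.le,
                abs_of_nonneg (by positivity : (0:ℝ) ≤ 2 / p)]
        _ = |w i * s i - (1 - 2 / p) * ∑ j, Q i j * y j| := by rw [heq]
        _ ≤ |w i * s i| + |(1 - 2 / p) * ∑ j, Q i j * y j| := abs_sub _ _
        _ ≤ w i * ‖s‖ + (1 - 2 / p) * (w i * ‖y‖) := by
            gcongr ?_ + ?_
            · rw [abs_mul, abs_of_nonneg hwi.le]
              exact mul_le_mul_of_nonneg_left hs hwi.le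
            · rw [abs_mul, abs_of_nonneg hc2]
              exact mul_le_mul_of_nonneg_left hsum hc2
    rw [← hyi] at h1
    have h2a : w i * ((4 / p - 1) * ‖y‖) ≤ w i * ‖s‖ := by
      have h1' := h1
      ring_nf at h1' ⊢
      linarith
    have h2 : (4 / p - 1) * ‖y‖ ≤ ‖s‖ := (mul_le_mul_iff_of_pos_left hwi).1 h2a
    rw [one_div_mul_eq_div]
    exact (le_div_iff₀ hc).2 (by linarith)
end

section
/- Let P be an m×m orthogonal projection matrix with W = diag(P), let R be a diagonal matrix with |R_{ii}| ≤ c for all i, and suppose W has positive diagonal entries. Then −c·W ≼ P∘(P R P) ≼ c·W in the Löwner order. -/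
open Matrix

lemma sum4_swap {n : Type*} [Fintype n] (f : n → n → n → n → ℝ) :
    ∑ i, ∑ j, ∑ k, ∑ l, f i j k l = ∑ k, ∑ l, ∑ i, ∑ j, f i j k l := by
  have h3 : ∀ g : n → n → n → ℝ, ∑ j, ∑ k, ∑ l, g j k l = ∑ k, ∑ l, ∑ j, g j k l := by
    intro g
    rw [Finset.sum_comm]
    exact Finset.sum_congr rfl fun k _ => Finset.sum_comm
  calc ∑ i, ∑ j, ∑ k, ∑ l, f i j k l
      = ∑ i, ∑ k, ∑ l, ∑ j, f i j k l := Finset.sum_congr rfl fun i _ => h3 _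
    _ = ∑ k, ∑ l, ∑ i, ∑ j, f i j k l := h3 _

open Finset in
/-- Schur product theorem over ℝ. -/
lemma hadamard_posSemidef' {n : Type*} [Fintype n] [DecidableEq n]
    {A B : Matrix n n ℝ} (hA : A.PosSemidef) (hB : B.PosSemidef) :
    (A.hadamard B).PosSemidef := by
  obtain ⟨C, hC⟩ := (by open scoped MatrixOrder in exact CStarAlgebra.nonneg_iff_eq_star_mul_self.mp hA.nonneg)
  rw [star_eq_conjTranspose] at hC; subst hC
  obtain ⟨D, hD⟩ := (by open scoped MatrixOrder in exact CStarAlgebra.nonneg_iff_eq_star_mul_self.mp hB.nonneg)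
  rw [star_eq_conjTranspose] at hD; subst hD
  refine Matrix.PosSemidef.of_dotProduct_mulVec_nonneg ?_ ?_
  · ext i j
    simp [Matrix.hadamard_apply, Matrix.mul_apply, Matrix.conjTranspose_apply]
    rw [Finset.sum_mul_sum, Finset.sum_mul_sum]
    apply Finset.sum_congr rfl; intro k _
    apply Finset.sum_congr rfl; intro l _
    ring
  · intro x
    have key : star x ⬝ᵥ ((Cᴴ * C).hadamard (Dᴴ * D)) *ᵥ x
        = ∑ k, ∑ l, (∑ i, x i * C k i * D l i) ^ 2 := by
      trans ∑ i, ∑ j, ∑ k, ∑ l, (x i * C k i * D l i) * (x j * C k j * D l j)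
      · simp only [star_trivial, dotProduct, mulVec, hadamard_apply, Matrix.mul_apply,
          Matrix.conjTranspose_apply, star_trivial]
        apply Finset.sum_congr rfl; intro i _
        rw [Finset.mul_sum]
        apply Finset.sum_congr rfl; intro j _
        rw [Finset.sum_mul_sum]
        simp only [Finset.sum_mul, Finset.mul_sum]
        apply Finset.sum_congr rfl; intro k _
        apply Finset.sum_congr rfl; intro l _
        ring
      · rw [sum4_swap]
        apply Finset.sum_congr rfl; intro k _
        apply Finset.sum_congr rfl; intro l _
        rw [sq, Finset.sum_mul_sum]
    rw [RCLike.nonneg_iff]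
    refine ⟨?_, by simp⟩
    rw [RCLike.re_to_real, key]
    exact Finset.sum_nonneg fun k _ => Finset.sum_nonneg fun l _ => sq_nonneg _

/-- `c•P + P R P` is PSD when `0 ≤ c + r i`. -/
lemma smul_add_sandwich_posSemidef {m : ℕ} (P : Matrix (Fin m) (Fin m) ℝ)
    (hsym : P.IsSymm) (hproj : P * P = P)
    (r : Fin m → ℝ) (c : ℝ) (hcr : ∀ i, 0 ≤ c + r i) :
    (c • P + P * Matrix.diagonal r * P).PosSemidef := by
  have hP : Pᴴ = P := by
    ext i j
    simp [Matrix.conjTranspose_apply, hsym.apply]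
  have hy : ∀ x : Fin m → ℝ, x ᵥ* P = P *ᵥ x := fun x => by
    rw [← Matrix.vecMul_transpose, hsym.eq]
  refine Matrix.PosSemidef.of_dotProduct_mulVec_nonneg ?_ ?_
  · show _ = _
    rw [Matrix.conjTranspose_add, Matrix.conjTranspose_smul, Matrix.conjTranspose_mul,
      Matrix.conjTranspose_mul, hP, Matrix.diagonal_conjTranspose]
    simp [Matrix.mul_assoc]
  · intro x
    set y := P *ᵥ x with hydef
    have key : star x ⬝ᵥ (c • P + P * Matrix.diagonal r * P) *ᵥ x
        = ∑ i, (c + r i) * (y i)^2 := by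
      have h1 : x ⬝ᵥ P *ᵥ x = ∑ i, (y i)^2 := by
        conv_lhs => rw [← hproj, ← Matrix.mulVec_mulVec, Matrix.dotProduct_mulVec, hy x]
        simp [dotProduct, sq, hydef]
      have h2 : x ⬝ᵥ (P * Matrix.diagonal r * P) *ᵥ x = ∑ i, r i * (y i)^2 := by
        rw [Matrix.mul_assoc, ← Matrix.mulVec_mulVec, Matrix.dotProduct_mulVec, hy x,
          ← Matrix.mulVec_mulVec]
        simp [dotProduct, Matrix.mulVec_diagonal, sq]
        exact Finset.sum_congr rfl fun i _ => by ring
      simp only [star_trivial, Matrix.add_mulVec, dotProduct_add,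
        Matrix.smul_mulVec, dotProduct_smul, smul_eq_mul, h1, h2,
        Finset.mul_sum, ← Finset.sum_add_distrib]
      exact Finset.sum_congr rfl fun i _ => by ring
    rw [RCLike.nonneg_iff]
    refine ⟨?_, by simp⟩
    rw [RCLike.re_to_real, key]
    exact Finset.sum_nonneg fun i _ => mul_nonneg (hcr i) (sq_nonneg _)

/-- For an orthogonal projection `P` with `W = diag(P)` having positive diagonal
entries and a diagonal matrix `R = diag(r)` with `|r i| ≤ c`, one has
`-c·W ≼ P∘(P R P) ≼ c·W` in the Löwner order. -/
theorem statement_2 {m : ℕ} (P : Matrix (Fin m) (Fin m) ℝ)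
    (hsym : P.IsSymm) (hproj : P * P = P)
    (hW : ∀ i, 0 < P i i)
    (r : Fin m → ℝ) (c : ℝ) (hr : ∀ i, |r i| ≤ c) :
    (P.hadamard (P * Matrix.diagonal r * P)
        + c • Matrix.diagonal (fun i => P i i)).PosSemidef ∧
    (c • Matrix.diagonal (fun i => P i i)
        - P.hadamard (P * Matrix.diagonal r * P)).PosSemidef := by
  rcases Nat.eq_zero_or_pos m with hm | hm
  · subst hm
    constructor <;>
    · refine Matrix.PosSemidef.of_dotProduct_mulVec_nonneg (by ext i j; exact i.elim0) fun x => ?_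
      simp [dotProduct]
  have hc : 0 ≤ c := le_trans (abs_nonneg _) (hr ⟨0, hm⟩)
  have hP : Pᴴ = P := by
    ext i j
    simp [Matrix.conjTranspose_apply, hsym.apply]
  -- P is PSD
  have hPsd : P.PosSemidef := by
    rw [show P = Pᴴ * P by rw [hP, hproj]]
    exact Matrix.posSemidef_conjTranspose_mul_self P
  -- 1 - P is PSD
  have hQsd : ((1 : Matrix (Fin m) (Fin m) ℝ) - P).PosSemidef := by
    have h1 : ((1 : Matrix (Fin m) (Fin m) ℝ) - P)ᴴ = 1 - P := by
      rw [Matrix.conjTranspose_sub, hP, Matrix.conjTranspose_one]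
    have h2 : ((1 : Matrix (Fin m) (Fin m) ℝ) - P) * (1 - P) = 1 - P := by
      have e : ((1 : Matrix (Fin m) (Fin m) ℝ) - P) * (1 - P) = 1 - P - P + P * P := by
        noncomm_ring
      rw [e, hproj]
      abel
    rw [show (1 : Matrix (Fin m) (Fin m) ℝ) - P = (1 - P)ᴴ * (1 - P) by rw [h1, h2]]
    exact Matrix.posSemidef_conjTranspose_mul_self _
  -- the "slack" term c • (P ⊙ (1 - P))
  have hcQ : (c • ((1 : Matrix (Fin m) (Fin m) ℝ) - P)).PosSemidef := by
    refine Matrix.PosSemidef.of_dotProduct_mulVec_nonneg ?_ ?_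
    · show _ = _
      rw [Matrix.conjTranspose_smul, hQsd.1.eq]
      simp
    · intro x
      rw [Matrix.smul_mulVec, dotProduct_smul, smul_eq_mul]
      exact mul_nonneg hc (hQsd.dotProduct_mulVec_nonneg x)
  have hslack : (P.hadamard (c • ((1 : Matrix (Fin m) (Fin m) ℝ) - P))).PosSemidef :=
    hadamard_posSemidef' hPsd hcQ
  constructor
  · have h1 : (P.hadamard (c • P + P * Matrix.diagonal r * P)).PosSemidef :=
      hadamard_posSemidef' hPsd
        (smul_add_sandwich_posSemidef P hsym hproj r c fun i =>
          by have := (abs_le.mp (hr i)).1; linarith)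
    have heq : P.hadamard (P * Matrix.diagonal r * P)
        + c • Matrix.diagonal (fun i => P i i)
        = P.hadamard (c • P + P * Matrix.diagonal r * P)
          + P.hadamard (c • ((1 : Matrix (Fin m) (Fin m) ℝ) - P)) := by
      ext i j
      by_cases h : i = j <;>
        simp [Matrix.hadamard_apply, Matrix.diagonal_apply, Matrix.one_apply, h] <;> ring
    rw [heq]
    exact h1.add hslack
  · have h1 : (P.hadamard (c • P + P * Matrix.diagonal (-r) * P)).PosSemidef :=
      hadamard_posSemidef' hPsd
        (smul_add_sandwich_posSemidef P hsym hproj (-r) c fun i =>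
          by have := (abs_le.mp (hr i)).2; simp; linarith)
    have heq : c • Matrix.diagonal (fun i => P i i)
        - P.hadamard (P * Matrix.diagonal r * P)
        = P.hadamard (c • P + P * Matrix.diagonal (-r) * P)
          + P.hadamard (c • ((1 : Matrix (Fin m) (Fin m) ℝ) - P)) := by
      have hneg : P * Matrix.diagonal (-r) * P = -(P * Matrix.diagonal r * P) := by
        have : Matrix.diagonal (-r) = -(Matrix.diagonal r) := by
          ext i j
          by_cases h : i = j <;> simp [Matrix.diagonal_apply, h]
        rw [this, Matrix.mul_neg, Matrix.neg_mul]
      rw [hneg]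
      ext i j
      by_cases h : i = j <;>
        simp [Matrix.hadamard_apply, Matrix.diagonal_apply, Matrix.one_apply, h] <;> ring
    rw [heq]
    exact h1.add hslack
end

section
/- Let p > 2, let m ≥ n ≥ 1 be integers, let A be an m×n real matrix, and let W = diag(w) with 0 < w_i ≤ 1 for all i. Then Aᵀ W^{1−2/p} A ≼ (m/n)^{2/p} · (Aᵀ W A + (n/m)·Aᵀ A) in the Löwner order. -/
open Matrix

lemma scalar_key {c w : ℝ} (hc0 : 0 < c) (hc1 : c ≤ 1) (hw0 : 0 < w) (hw1 : w ≤ 1)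
    {e : ℝ} (he0 : 0 < e) (he1 : e < 1) :
    w ^ (1 - e) ≤ c ^ (-e) * (w + c) := by
  rcases le_total w c with h | h
  · have h1 : w ^ (1 - e) ≤ c ^ (1 - e) :=
      Real.rpow_le_rpow hw0.le h (by linarith)
    have h2 : c ^ (1 - e) = c ^ (-e) * c := by
      rw [← Real.rpow_add_one hc0.ne' (-e)]; ring_nf
    nlinarith [Real.rpow_nonneg hc0.le (-e), hw0.le]
  · have h1 : w ^ (-e) ≤ c ^ (-e) :=
      Real.rpow_le_rpow_of_nonpos hc0 h (by linarith)
    have h2 : w ^ (1 - e) = w ^ (-e) * w := by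
      rw [← Real.rpow_add_one hw0.ne' (-e)]; ring_nf
    nlinarith [Real.rpow_nonneg hc0.le (-e)]

/-- For `p > 2`, `m ≥ n ≥ 1`, an `m×n` matrix `A` and `W = diag(w)` with
`0 < wᵢ ≤ 1`, one has `Aᵀ W^{1-2/p} A ≼ (m/n)^{2/p}·(Aᵀ W A + (n/m)·Aᵀ A)`. -/
theorem statement_3 {m n : ℕ} (p : ℝ) (hp : 2 < p)
    (hn : 1 ≤ n) (hmn : n ≤ m)
    (A : Matrix (Fin m) (Fin n) ℝ)
    (w : Fin m → ℝ) (hw : ∀ i, 0 < w i) (hw1 : ∀ i, w i ≤ 1) :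
    (((m : ℝ) / n) ^ (2 / p) •
        (Aᵀ * Matrix.diagonal w * A + ((n : ℝ) / m) • (Aᵀ * A))
      - Aᵀ * Matrix.diagonal (fun i => w i ^ (1 - 2 / p)) * A).PosSemidef := by
  set β : ℝ := ((m : ℝ) / n) ^ (2 / p) with hβ
  set c : ℝ := (n : ℝ) / m with hc
  have hn0 : (0 : ℝ) < n := by exact_mod_cast hn
  have hm0 : (0 : ℝ) < m := lt_of_lt_of_le hn0 (by exact_mod_cast hmn)
  have hc0 : 0 < c := div_pos hn0 hm0
  have hc1 : c ≤ 1 := (div_le_one hm0).mpr (by exact_mod_cast hmn)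
  have hβc : β = c ^ (-(2 / p)) := by
    rw [hβ, hc, Real.rpow_neg hc0.le, ← Real.inv_rpow hc0.le, inv_div]
  have he0 : 0 < 2 / p := by positivity
  have he1 : 2 / p < 1 := by
    rw [div_lt_one (by linarith)]; linarith
  set d : Fin m → ℝ := fun i => β * w i + β * c - w i ^ (1 - 2 / p) with hd
  have hdnn : ∀ i, 0 ≤ d i := by
    intro i
    have := scalar_key hc0 hc1 (hw i) (hw1 i) he0 he1
    simp only [hd, ← hβc] at *
    nlinarith
  have key : (((m : ℝ) / n) ^ (2 / p) •
        (Aᵀ * Matrix.diagonal w * A + ((n : ℝ) / m) • (Aᵀ * A))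
      - Aᵀ * Matrix.diagonal (fun i => w i ^ (1 - 2 / p)) * A)
      = Aᵀ * Matrix.diagonal d * A := by
    have entry : ∀ (v : Fin m → ℝ) (i j),
        (Aᵀ * Matrix.diagonal v * A) i j = ∑ k, v k * (A k i * A k j) := by
      intro v i j
      rw [Matrix.mul_assoc, Matrix.mul_apply]
      apply Finset.sum_congr rfl
      intro k _
      rw [Matrix.diagonal_mul, Matrix.transpose_apply]
      ring
    ext i j
    simp only [Matrix.sub_apply, Matrix.smul_apply, Matrix.add_apply, smul_eq_mul, entry,
      Matrix.mul_apply, Matrix.transpose_apply]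
    simp only [Finset.mul_sum, ← Finset.sum_add_distrib, ← Finset.sum_sub_distrib]
    apply Finset.sum_congr rfl
    intro k _
    simp only [hd]
    ring
  rw [key]
  have hdiag : (Matrix.diagonal d).PosSemidef :=
    Matrix.posSemidef_diagonal_iff.mpr hdnn
  have := hdiag.conjTranspose_mul_mul_same A
  simpa using this
end

section
/- Let p > 2, m ≥ n ≥ 1, let A be an m×n real matrix with rows a_1,…,a_m, let W = diag(w) with 0 < w_i ≤ 1, and suppose Aᵀ W^{1−2/p} A is invertible with a_iᵀ (Aᵀ W^{1−2/p} A)^{−1} a_i = w_i^{2/p} for a fixed index i. Let g'' be any symmetric positive definite matrix with g'' ⪰ Aᵀ W A + (n/m)·Aᵀ A. Then a_iᵀ (g'')^{−1} a_i ≤ (m/n)^{(2/p)/(1+2/p)}. -/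
open Matrix

private lemma qf_diag {m n : ℕ} (A : Matrix (Fin m) (Fin n) ℝ) (d : Fin m → ℝ)
    (x : Fin n → ℝ) :
    x ⬝ᵥ (Aᵀ * Matrix.diagonal d * A).mulVec x = ∑ j, d j * (A.mulVec x j)^2 := by
  rw [← Matrix.mulVec_mulVec, ← Matrix.mulVec_mulVec, Matrix.dotProduct_mulVec,
    Matrix.vecMul_transpose]
  simp [Matrix.mulVec_diagonal, dotProduct, sq, mul_comm, mul_left_comm]


/-- Leverage bound for the hybrid metric: if the `p`-Lewis weight fixed point
`aᵢᵀ(Aᵀ W^{1-2/p} A)⁻¹ aᵢ = wᵢ^{2/p}` holds and `g'' ⪰ Aᵀ W A + (n/m)·Aᵀ A` is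
symmetric positive definite, then `aᵢᵀ (g'')⁻¹ aᵢ ≤ (m/n)^{(2/p)/(1+2/p)}`. -/
theorem statement_5 {m n : ℕ} (p : ℝ) (hp : 2 < p)
    (hn : 1 ≤ n) (hmn : n ≤ m)
    (A : Matrix (Fin m) (Fin n) ℝ)
    (w : Fin m → ℝ) (hw : ∀ j, 0 < w j) (hw1 : ∀ j, w j ≤ 1)
    (i : Fin m)
    (hinv : IsUnit (Aᵀ * Matrix.diagonal (fun j => w j ^ (1 - 2 / p)) * A).det)
    (hfix : A i ⬝ᵥ
        (Aᵀ * Matrix.diagonal (fun j => w j ^ (1 - 2 / p)) * A)⁻¹.mulVec (A i)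
        = w i ^ (2 / p))
    (g'' : Matrix (Fin n) (Fin n) ℝ) (hg : g''.PosDef)
    (hdom : (g'' - (Aᵀ * Matrix.diagonal w * A + ((n : ℝ) / m) • (Aᵀ * A))).PosSemidef) :
    A i ⬝ᵥ (g'')⁻¹.mulVec (A i) ≤ ((m : ℝ) / n) ^ ((2 / p) / (1 + 2 / p)) := by
  have hp0 : 0 < p := by linarith
  set α : ℝ := 2 / p with hα
  have hα0 : 0 < α := by positivity
  have hα1 : α < 1 := by
    rw [hα, div_lt_one hp0]; linarith
  have hn0 : (0:ℝ) < n := by exact_mod_cast hn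
  have hm0 : (0:ℝ) < m := lt_of_lt_of_le hn0 (by exact_mod_cast hmn)
  set r : ℝ := (m:ℝ) / n with hr
  have hr1 : 1 ≤ r := (one_le_div hn0).mpr (by exact_mod_cast hmn)
  have hr0 : 0 < r := lt_of_lt_of_le one_pos hr1
  set s : ℝ := (n:ℝ) / m with hs
  have hs0 : 0 < s := by positivity
  have hsr : s = r⁻¹ := by
    rw [hs, hr, ← one_div, one_div_div]
  set M : Matrix (Fin n) (Fin n) ℝ :=
    Aᵀ * Matrix.diagonal (fun j => w j ^ (1 - 2 / p)) * A with hM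
  set x : Fin n → ℝ := (g'')⁻¹.mulVec (A i) with hx
  set t : ℝ := A i ⬝ᵥ x with ht
  -- g'' * x = A i
  have hgdet : IsUnit g''.det := isUnit_iff_ne_zero.mpr (ne_of_gt hg.det_pos)
  have hgx : g''.mulVec x = A i := by
    rw [hx, Matrix.mulVec_mulVec, Matrix.mul_nonsing_inv _ hgdet, Matrix.one_mulVec]
  have hqt : x ⬝ᵥ g''.mulVec x = t := by
    rw [hgx, ht, dotProduct_comm]
  have htnn : 0 ≤ t := by rw [← hqt]; simpa using hg.posSemidef.dotProduct_mulVec_nonneg x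
  -- quadratic form domination
  have hdomx : ∀ z : Fin n → ℝ,
      z ⬝ᵥ (Aᵀ * Matrix.diagonal w * A).mulVec z + s * (z ⬝ᵥ (Aᵀ * A).mulVec z)
        ≤ z ⬝ᵥ g''.mulVec z := by
    intro z
    have h := hdom.dotProduct_mulVec_nonneg z
    simp only [Matrix.sub_mulVec, Matrix.add_mulVec, dotProduct_sub, dotProduct_add,
      Matrix.smul_mulVec, dotProduct_smul, smul_eq_mul, star_trivial] at h
    linarith
  -- quadratic forms as sums
  have hqfW : ∀ z : Fin n → ℝ, z ⬝ᵥ (Aᵀ * Matrix.diagonal w * A).mulVec z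
      = ∑ j, w j * (A.mulVec z j)^2 := fun z => qf_diag A w z
  have hqfI : ∀ z : Fin n → ℝ, z ⬝ᵥ (Aᵀ * A).mulVec z = ∑ j, (A.mulVec z j)^2 := by
    intro z
    have : Aᵀ * A = Aᵀ * Matrix.diagonal (fun _ : Fin m => (1:ℝ)) * A := by
      rw [Matrix.diagonal_one, Matrix.mul_one]
    rw [this, qf_diag]; simp
  have hqfM : ∀ z : Fin n → ℝ, z ⬝ᵥ M.mulVec z
      = ∑ j, (w j ^ (1 - 2/p)) * (A.mulVec z j)^2 := fun z => qf_diag A _ z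
  -- Bound 1 : w i * t^2 ≤ t
  have hb1 : w i * t^2 ≤ t := by
    have h1 : w i * (A.mulVec x i)^2 ≤ ∑ j, w j * (A.mulVec x j)^2 := by
      apply Finset.single_le_sum (f := fun j => w j * (A.mulVec x j)^2)
      · intro j _; exact mul_nonneg (hw j).le (sq_nonneg _)
      · exact Finset.mem_univ i
    have h2 : (0:ℝ) ≤ s * (x ⬝ᵥ (Aᵀ * A).mulVec x) := by
      rw [hqfI]; positivity
    have h3 := hdomx x
    rw [hqfW, hqt] at h3
    have hAxi : A.mulVec x i = t := by
      rw [ht, Matrix.mulVec, dotProduct_comm]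
    calc w i * t^2 = w i * (A.mulVec x i)^2 := by rw [hAxi]
      _ ≤ ∑ j, w j * (A.mulVec x j)^2 := h1
      _ ≤ t := by linarith
  -- pointwise AM-GM : w^{1-α} ≤ r^α * (w + s)
  have hptw : ∀ j, w j ^ (1 - 2/p) ≤ r ^ α * (w j + s) := by
    intro j
    have hwj := hw j
    have hamgm := Real.geom_mean_le_arith_mean2_weighted
      (by linarith : (0:ℝ) ≤ 1 - α) (le_of_lt hα0) (le_of_lt hwj) (le_of_lt hs0)
      (by ring)
    have hkey : w j ^ (1 - α) * s ^ α ≤ w j + s := by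
      calc w j ^ (1-α) * s ^ α ≤ (1-α) * w j + α * s := hamgm
        _ ≤ w j + s := by nlinarith [hw j, hs0]
    have hsα : s ^ α = (r ^ α)⁻¹ := by
      rw [hsr, Real.inv_rpow hr0.le]
    have hrα : 0 < r ^ α := Real.rpow_pos_of_pos hr0 α
    have := mul_le_mul_of_nonneg_left hkey (le_of_lt hrα)
    calc w j ^ (1 - 2/p) = r ^ α * (w j ^ (1-α) * s ^ α) := by
          rw [hsα]; field_simp [hα]; rw [hα, one_sub_div hp0.ne']
      _ ≤ r ^ α * (w j + s) := this
  -- Bound on x M x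
  have hxMx : x ⬝ᵥ M.mulVec x ≤ r ^ α * t := by
    have h3 := hdomx x
    rw [hqfW, hqfI, hqt] at h3
    rw [hqfM]
    have hstep : ∑ j, (w j ^ (1 - 2/p)) * (A.mulVec x j)^2
        ≤ ∑ j, r ^ α * ((w j + s) * (A.mulVec x j)^2) := by
      apply Finset.sum_le_sum
      intro j _
      have := mul_le_mul_of_nonneg_right (hptw j) (sq_nonneg (A.mulVec x j))
      linarith [this]
    calc ∑ j, (w j ^ (1 - 2/p)) * (A.mulVec x j)^2
        ≤ ∑ j, r ^ α * ((w j + s) * (A.mulVec x j)^2) := hstep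
      _ = r ^ α * (∑ j, w j * (A.mulVec x j)^2 + s * ∑ j, (A.mulVec x j)^2) := by
          rw [← Finset.mul_sum]
          congr 1
          rw [Finset.mul_sum, ← Finset.sum_add_distrib]
          apply Finset.sum_congr rfl
          intro j _; ring
      _ ≤ r ^ α * t := by
          apply mul_le_mul_of_nonneg_left _ (le_of_lt (Real.rpow_pos_of_pos hr0 α))
          linarith
  -- Cauchy-Schwarz : t^2 ≤ (x M x) * (w i ^ α)
  set y : Fin n → ℝ := M⁻¹.mulVec (A i) with hy
  have hMy : M.mulVec y = A i := by
    rw [hy, Matrix.mulVec_mulVec, Matrix.mul_nonsing_inv _ hinv, Matrix.one_mulVec]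
  have hyMy : y ⬝ᵥ M.mulVec y = w i ^ α := by
    rw [hMy, dotProduct_comm, ← hfix, hy]
  have hxMy : x ⬝ᵥ M.mulVec y = t := by
    rw [hMy, dotProduct_comm, ht]
  have hCS : t^2 ≤ (x ⬝ᵥ M.mulVec x) * (w i ^ α) := by
    have hbil : x ⬝ᵥ M.mulVec y
        = ∑ j, (w j ^ (1 - 2/p)) * (A.mulVec x j * A.mulVec y j) := by
      rw [hM, ← Matrix.mulVec_mulVec, ← Matrix.mulVec_mulVec, Matrix.dotProduct_mulVec,
        Matrix.vecMul_transpose]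
      simp [Matrix.mulVec_diagonal, dotProduct, mul_comm, mul_left_comm]
    have hd : ∀ j, (0:ℝ) ≤ w j ^ (1 - 2/p) := fun j => Real.rpow_nonneg (le_of_lt (hw j)) _
    have hcs := Finset.sum_mul_sq_le_sq_mul_sq Finset.univ
      (fun j => Real.sqrt (w j ^ (1 - 2/p)) * A.mulVec x j)
      (fun j => Real.sqrt (w j ^ (1 - 2/p)) * A.mulVec y j)
    have e1 : ∑ j, (Real.sqrt (w j ^ (1 - 2/p)) * A.mulVec x j)
          * (Real.sqrt (w j ^ (1 - 2/p)) * A.mulVec y j)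
        = x ⬝ᵥ M.mulVec y := by
      rw [hbil]
      apply Finset.sum_congr rfl
      intro j _
      rw [show Real.sqrt (w j ^ (1 - 2/p)) * A.mulVec x j
          * (Real.sqrt (w j ^ (1 - 2/p)) * A.mulVec y j)
          = (Real.sqrt (w j ^ (1 - 2/p)) * Real.sqrt (w j ^ (1 - 2/p)))
            * (A.mulVec x j * A.mulVec y j) by ring,
        Real.mul_self_sqrt (hd j)]
    have e2 : ∑ j, (Real.sqrt (w j ^ (1 - 2/p)) * A.mulVec x j)^2
        = x ⬝ᵥ M.mulVec x := by
      rw [hqfM]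
      apply Finset.sum_congr rfl
      intro j _
      rw [mul_pow, Real.sq_sqrt (hd j)]
    have e3 : ∑ j, (Real.sqrt (w j ^ (1 - 2/p)) * A.mulVec y j)^2
        = y ⬝ᵥ M.mulVec y := by
      rw [hqfM]
      apply Finset.sum_congr rfl
      intro j _
      rw [mul_pow, Real.sq_sqrt (hd j)]
    rw [e1, e2, e3, hxMy, hyMy] at hcs
    exact hcs
  -- Combine : t^2 ≤ r^α * w i^α * t  and  w i * t^2 ≤ t
  have hb2 : t^2 ≤ r ^ α * (w i ^ α) * t := by
    calc t^2 ≤ (x ⬝ᵥ M.mulVec x) * (w i ^ α) := hCS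
      _ ≤ (r ^ α * t) * (w i ^ α) :=
        mul_le_mul_of_nonneg_right hxMx (Real.rpow_nonneg (le_of_lt (hw i)) α)
      _ = r ^ α * (w i ^ α) * t := by ring
  -- Final scalar argument
  rcases eq_or_lt_of_le htnn with h0 | htpos
  · rw [← h0]
    exact Real.rpow_nonneg (by positivity) _
  · -- t > 0
    have hwi := hw i
    have hwi := hw i
    have ht1 : t ≤ r ^ α * w i ^ α := by
      have h := hb2
      rw [sq] at h
      exact le_of_mul_le_mul_right h htpos
    have ht2 : t * w i ≤ 1 := by
      have h' : (t * w i) * t ≤ 1 * t := by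
        calc (t * w i) * t = w i * t^2 := by ring
          _ ≤ t := hb1
          _ = 1 * t := (one_mul t).symm
      exact le_of_mul_le_mul_right h' htpos
    have h1α : (0:ℝ) < 1 + α := by linarith
    have htinv : t ≤ 1 / w i := (le_div_iff₀ hwi).mpr ht2
    have htα : t ^ α ≤ (1 / w i) ^ α := Real.rpow_le_rpow htnn htinv hα0.le
    have hwiα : (0:ℝ) < w i ^ α := Real.rpow_pos_of_pos hwi α
    have hkey : t ^ (1 + α) ≤ r ^ α := by
      rw [Real.rpow_add htpos, Real.rpow_one]
      calc t * t ^ α ≤ (r ^ α * w i ^ α) * ((1/w i) ^ α) := by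
            apply mul_le_mul ht1 htα (Real.rpow_nonneg htnn α) (by positivity)
        _ = r ^ α := by
            rw [one_div, Real.inv_rpow hwi.le]
            field_simp
    calc t = (t ^ (1 + α)) ^ (1/(1+α)) := by
          rw [← Real.rpow_mul htnn, mul_one_div, div_self h1α.ne', Real.rpow_one]
      _ ≤ (r ^ α) ^ (1/(1+α)) :=
          Real.rpow_le_rpow (Real.rpow_nonneg htnn _) hkey (by positivity)
      _ = r ^ (α/(1+α)) := by rw [← Real.rpow_mul hr0.le, mul_one_div]
end
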